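/- Let a : [t₁,∞) × ℝ → ℝ be continuous with continuous spatial derivative ∂ₓa, 1-periodic in the space variable, and bounded. Let w : [t₁,∞) × ℝ → ℝ be continuous together with ∂ₜw, ∂ₓw, ∂ₓₓw, be 1-periodic in the space variable and satisfy ∂ₜw − ∂ₓₓw + ∂ₓ(a·w) = 0 on (t₁,∞) × ℝ. Then the function t ↦ ∫₀¹ |w(t,x)| dx is non-increasing on [t₁,∞). (L¹ contraction for the conservation-form linear convection–diffusion equation with periodic boundary conditions.) -/

import Mathlib

open Set Real

/-- Spatial partial derivative ∂ₓw(t,x). -/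
noncomputable def partialX (w : ℝ → ℝ → ℝ) (t x : ℝ) : ℝ := deriv (w t) x

/-- Temporal partial derivative ∂ₜw(t,x). -/
noncomputable def partialT (w : ℝ → ℝ → ℝ) (t x : ℝ) : ℝ := deriv (fun s => w s x) t

/-- Second spatial partial derivative ∂ₓₓw(t,x). -/
noncomputable def partialXX (w : ℝ → ℝ → ℝ) : ℝ → ℝ → ℝ := partialX (partialX w)

/-!
Replace `|·|` by the smooth convex function `φ_ε(s) = √(s² + ε²)`. Writing the equation as
`∂ₜw = ∂ₓv` with the flux `v = ∂ₓw − a w`, one integration by parts (whose boundary terms cancel by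
periodicity) gives `d/dt ∫₀¹ φ_ε(w) = −∫₀¹ φ_ε''(w) ∂ₓw (∂ₓw − a w) ≤ ε K² / 4` for `|a| ≤ K`,
because `φ_ε'' ≥ 0` and `φ_ε''(s) s² ≤ ε`. Hence `∫₀¹ φ_ε(w)` grows at most like `ε K² t / 4`, and
`|s| ≤ φ_ε(s) ≤ |s| + ε` lets `ε → 0`.
-/

open Filter Topology MeasureTheory

noncomputable def smoothAbs (ε s : ℝ) : ℝ := √(s ^ 2 + ε ^ 2)

noncomputable def smoothAbsDeriv (ε s : ℝ) : ℝ := s / √(s ^ 2 + ε ^ 2)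

noncomputable def smoothAbsDeriv2 (ε s : ℝ) : ℝ := ε ^ 2 / ((s ^ 2 + ε ^ 2) * √(s ^ 2 + ε ^ 2))

section SmoothAbs

variable {ε : ℝ}

lemma hasDerivAt_smoothAbs (hε : 0 < ε) (s : ℝ) :
    HasDerivAt (smoothAbs ε) (smoothAbsDeriv ε s) s := by
  have h : HasDerivAt (smoothAbs ε) _ s :=
    ((hasDerivAt_pow 2 s).add_const (ε ^ 2)).sqrt (by positivity)
  convert h using 1
  rw [smoothAbsDeriv]
  field_simp
  push_cast
  ring

lemma hasDerivAt_smoothAbsDeriv (hε : 0 < ε) (s : ℝ) :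
    HasDerivAt (smoothAbsDeriv ε) (smoothAbsDeriv2 ε s) s := by
  have h : HasDerivAt (smoothAbsDeriv ε) _ s :=
    (hasDerivAt_id s).div (hasDerivAt_smoothAbs hε s) (by positivity)
  convert h using 1
  have hsq : √(s ^ 2 + ε ^ 2) ^ 2 = s ^ 2 + ε ^ 2 := Real.sq_sqrt (by positivity)
  simp only [smoothAbsDeriv2, smoothAbsDeriv, id, one_mul]
  field_simp
  rw [hsq]
  ring

lemma continuous_smoothAbs : Continuous (smoothAbs ε) := by
  unfold smoothAbs; fun_prop

lemma continuous_smoothAbsDeriv (hε : 0 < ε) : Continuous (smoothAbsDeriv ε) :=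
  continuous_iff_continuousAt.2 fun s => (hasDerivAt_smoothAbsDeriv hε s).continuousAt

lemma continuous_smoothAbsDeriv2 (hε : 0 < ε) : Continuous (smoothAbsDeriv2 ε) := by
  unfold smoothAbsDeriv2
  exact continuous_const.div (by fun_prop) fun s => by positivity

lemma abs_smoothAbsDeriv_le_one (s : ℝ) : |smoothAbsDeriv ε s| ≤ 1 := by
  rw [smoothAbsDeriv, abs_div, abs_of_nonneg (Real.sqrt_nonneg _), ← Real.sqrt_sq_eq_abs]
  exact div_le_one_of_le₀ (Real.sqrt_le_sqrt (le_add_of_nonneg_right (sq_nonneg ε)))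
    (Real.sqrt_nonneg _)

lemma abs_le_smoothAbs (s : ℝ) : |s| ≤ smoothAbs ε s := by
  rw [smoothAbs, ← Real.sqrt_sq_eq_abs]
  exact Real.sqrt_le_sqrt (le_add_of_nonneg_right (sq_nonneg ε))

lemma smoothAbs_le_abs_add (hε : 0 ≤ ε) (s : ℝ) : smoothAbs ε s ≤ |s| + ε := by
  rw [smoothAbs, Real.sqrt_le_left (by positivity)]
  nlinarith [sq_abs s, abs_nonneg s]

-- Complete the square in `d`, then use `φ_ε''(v) v² ≤ ε`.
lemma smoothAbsDeriv2_mul_le (hε : 0 < ε) (A v d : ℝ) :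
    smoothAbsDeriv2 ε v * (A * v * d - d ^ 2) ≤ ε * A ^ 2 / 4 := by
  have hpos : 0 < √(v ^ 2 + ε ^ 2) := by positivity
  have hε_le : ε ≤ √(v ^ 2 + ε ^ 2) := Real.le_sqrt_of_sq_le (by nlinarith)
  have hnonneg : 0 ≤ smoothAbsDeriv2 ε v := by unfold smoothAbsDeriv2; positivity
  have hv : smoothAbsDeriv2 ε v * v ^ 2 ≤ ε := by
    rw [smoothAbsDeriv2, div_mul_eq_mul_div, div_le_iff₀ (by positivity)]
    nlinarith [mul_le_mul_of_nonneg_left hε_le (by positivity : (0 : ℝ) ≤ ε * v ^ 2),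
      mul_pos (pow_pos hε 3) hpos]
  nlinarith [mul_nonneg hnonneg (sq_nonneg (d - A * v / 2)),
    mul_le_mul_of_nonneg_left hv (sq_nonneg A)]

end SmoothAbs

lemma le_of_forall_pos_le_add_mul {x y C : ℝ} (h : ∀ ε > 0, x ≤ y + ε * C) : x ≤ y := by
  have hc : Continuous fun ε : ℝ => y + ε * C := by fun_prop
  exact ge_of_tendsto ((hc.tendsto' 0 y (by simp)).mono_left nhdsWithin_le_nhds)
    (eventually_nhdsWithin_of_forall (s := Ioi 0) h)

lemma Function.Periodic.deriv {f : ℝ → ℝ} {c : ℝ} (hf : Function.Periodic f c) :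
    Function.Periodic (deriv f) c := fun x => by
  rw [← deriv_comp_add_const, hf.funext]

section IntervalIntegral

variable {p q : ℝ}

lemma integral_abs_le_integral_smoothAbs {f : ℝ → ℝ} (hf : Continuous f) (hpq : p ≤ q)
    (ε : ℝ) : ∫ x in p..q, |f x| ≤ ∫ x in p..q, smoothAbs ε (f x) :=
  intervalIntegral.integral_mono_on hpq (hf.abs.intervalIntegrable (μ := volume) p q)
    ((continuous_smoothAbs.comp hf).intervalIntegrable p q) fun x _ => abs_le_smoothAbs (f x)

lemma integral_smoothAbs_le_integral_abs_add {f : ℝ → ℝ} (hf : Continuous f) (hpq : p ≤ q)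
    {ε : ℝ} (hε : 0 ≤ ε) :
    ∫ x in p..q, smoothAbs ε (f x) ≤ (∫ x in p..q, |f x|) + ε * (q - p) := by
  have hint := hf.abs.intervalIntegrable (μ := volume) p q
  calc ∫ x in p..q, smoothAbs ε (f x) ≤ ∫ x in p..q, (|f x| + ε) :=
        intervalIntegral.integral_mono_on hpq
          ((continuous_smoothAbs.comp hf).intervalIntegrable p q)
          (hint.add intervalIntegrable_const) fun x _ => smoothAbs_le_abs_add hε (f x)
    _ = (∫ x in p..q, |f x|) + ε * (q - p) := by
        rw [intervalIntegral.integral_add hint intervalIntegrable_const,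
          intervalIntegral.integral_const, smul_eq_mul, mul_comm]

lemma continuousOn_parametric_intervalIntegral {X : Type*} [TopologicalSpace X]
    {f : X → ℝ → ℝ} {S : Set X} (hf : ContinuousOn (Function.uncurry f) (S ×ˢ univ)) :
    ContinuousOn (fun t => ∫ x in p..q, f t x) S := by
  rw [continuousOn_iff_continuous_domRestrict]
  refine intervalIntegral.continuous_parametric_intervalIntegral_of_continuous'
    (f := fun (t : S) x => f t x) ?_ p q
  exact hf.comp_continuous ((continuous_subtype_val.comp continuous_fst).prodMk continuous_snd)
    fun z : S × ℝ => ⟨z.1.2, trivial⟩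

theorem hasDerivAt_intervalIntegral_comp {g g' : ℝ → ℝ} {L : ℝ}
    (hg : ∀ s, HasDerivAt g (g' s) s) (hg'c : Continuous g') (hg'L : ∀ s, |g' s| ≤ L)
    {w : ℝ → ℝ → ℝ} {U : Set ℝ} {t : ℝ} (hU : IsOpen U) (ht : t ∈ U)
    (hw : ∀ τ ∈ U, Continuous (w τ))
    (hwt : ∀ τ ∈ U, ∀ x, DifferentiableAt ℝ (fun s => w s x) τ)
    (hwtc : ContinuousOn (Function.uncurry (partialT w)) (U ×ˢ uIcc p q)) :
    HasDerivAt (fun τ => ∫ x in p..q, g (w τ x))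
      (∫ x in p..q, g' (w t x) * partialT w t x) t := by
  have hgc : Continuous g := continuous_iff_continuousAt.2 fun s => (hg s).continuousAt
  obtain ⟨δ, hδ, hball⟩ := Metric.nhds_basis_closedBall.mem_iff.1 (hU.mem_nhds ht)
  obtain ⟨M, hM⟩ :=
    ((isCompact_closedBall t δ).prod isCompact_uIcc).exists_bound_of_continuousOn
      (hwtc.mono (prod_mono hball subset_rfl))
  have hslice : ContinuousOn (partialT w t) (uIcc p q) := hwtc.uncurry_left t ht
  refine (intervalIntegral.hasDerivAt_integral_of_dominated_loc_of_deriv_le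
    (μ := volume) (F := fun τ x => g (w τ x))
    (F' := fun τ x => g' (w τ x) * partialT w τ x) (bound := fun _ => L * M)
    (Metric.closedBall_mem_nhds t hδ) ?_ ((hgc.comp (hw t ht)).intervalIntegrable p q) ?_ ?_
    intervalIntegrable_const ?_).2
  · filter_upwards [hU.mem_nhds ht] with τ hτ
    exact (hgc.comp (hw τ hτ)).aestronglyMeasurable
  · exact (((hg'c.comp (hw t ht)).continuousOn).mul (hslice.mono uIoc_subset_uIcc)
      ).aestronglyMeasurable measurableSet_uIoc
  · filter_upwards with x hx τ hτ
    rw [norm_mul, Real.norm_eq_abs]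
    exact mul_le_mul (hg'L _) (hM (τ, x) ⟨hτ, uIoc_subset_uIcc hx⟩) (norm_nonneg _)
      ((abs_nonneg _).trans (hg'L 0))
  · filter_upwards with x _ τ hτ
    exact (hg (w τ x)).comp τ (hwt τ (hball hτ) x).hasDerivAt

theorem integral_smoothAbs_sub_le_of_rate_le {ε C t₁ : ℝ} (hε : 0 < ε)
    {w : ℝ → ℝ → ℝ}
    (hwc : ContinuousOn (Function.uncurry w) (Ici t₁ ×ˢ univ))
    (hwt : ∀ t ∈ Ioi t₁, ∀ x, DifferentiableAt ℝ (fun s => w s x) t)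
    (hwtc : ContinuousOn (Function.uncurry (partialT w)) (Ioi t₁ ×ˢ uIcc p q))
    (hrate : ∀ t ∈ Ioi t₁, ∫ x in p..q, smoothAbsDeriv ε (w t x) * partialT w t x ≤ C)
    {s t : ℝ} (hs : s ∈ Ici t₁) (ht : t ∈ Ici t₁) (hst : s ≤ t) :
    (∫ x in p..q, smoothAbs ε (w t x)) - ∫ x in p..q, smoothAbs ε (w s x)
      ≤ C * (t - s) := by
  have hderiv : ∀ t ∈ interior (Ici t₁),
      HasDerivAt (fun τ => ∫ x in p..q, smoothAbs ε (w τ x))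
        (∫ x in p..q, smoothAbsDeriv ε (w t x) * partialT w t x) t := by
    rw [interior_Ici]
    exact fun t ht => hasDerivAt_intervalIntegral_comp (hasDerivAt_smoothAbs hε)
      (continuous_smoothAbsDeriv hε) abs_smoothAbsDeriv_le_one isOpen_Ioi ht
      (fun τ hτ => continuousOn_univ.1 (hwc.uncurry_left τ (Ioi_subset_Ici_self hτ))) hwt hwtc
  refine (convex_Ici t₁).image_sub_le_mul_sub_of_deriv_le
    (continuousOn_parametric_intervalIntegral (f := fun τ x => smoothAbs ε (w τ x))
      (continuous_smoothAbs.comp_continuousOn hwc))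
    (fun t ht => (hderiv t ht).differentiableAt.differentiableWithinAt)
    (fun t ht => (hderiv t ht).deriv ▸ hrate t (interior_Ici.subset ht)) s hs t ht hst

theorem integral_smoothAbsDeriv_mul_deriv_flux_le {ε K : ℝ} (hε : 0 < ε) (hpq : p ≤ q)
    {u u' v v' b : ℝ → ℝ} (hu : ∀ x ∈ Icc p q, HasDerivAt u (u' x) x)
    (hu' : ContinuousOn u' (Icc p q)) (hv : ∀ x ∈ Icc p q, HasDerivAt v (v' x) x)
    (hv' : IntervalIntegrable v' volume p q) (hflux : ∀ x ∈ Icc p q, v x = u' x - b x * u x)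
    (hb : ∀ x ∈ Icc p q, |b x| ≤ K) (hup : u q = u p) (hvp : v q = v p) :
    ∫ x in p..q, smoothAbsDeriv ε (u x) * v' x ≤ ε * K ^ 2 / 4 * (q - p) := by
  rw [← uIcc_of_le hpq] at hu hu' hv hflux hb
  have huc : ContinuousOn u (uIcc p q) := fun x hx => (hu x hx).continuousAt.continuousWithinAt
  have hvc : ContinuousOn v (uIcc p q) := fun x hx => (hv x hx).continuousAt.continuousWithinAt
  have hdiss : ContinuousOn (fun x => smoothAbsDeriv2 ε (u x) * u' x) (uIcc p q) :=
    ((continuous_smoothAbsDeriv2 hε).comp_continuousOn huc).mul hu'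
  have hφu : ∀ x ∈ uIcc p q, HasDerivAt (fun x => smoothAbsDeriv ε (u x))
      (smoothAbsDeriv2 ε (u x) * u' x) x :=
    fun x hx => (hasDerivAt_smoothAbsDeriv hε (u x)).comp x (hu x hx)
  rw [intervalIntegral.integral_mul_deriv_eq_deriv_mul hφu hv hdiss.intervalIntegrable hv', hup,
    hvp, sub_self, zero_sub, ← intervalIntegral.integral_neg]
  calc ∫ x in p..q, -(smoothAbsDeriv2 ε (u x) * u' x * v x)
      ≤ ∫ _ in p..q, ε * K ^ 2 / 4 := by
        refine intervalIntegral.integral_mono_on hpq (hdiss.mul hvc).neg.intervalIntegrable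
          intervalIntegrable_const fun x hx => ?_
        have hbK : b x ^ 2 ≤ K ^ 2 := by
          simpa only [sq_abs] using pow_le_pow_left₀ (abs_nonneg _) (hb x (Icc_subset_uIcc hx)) 2
        calc -(smoothAbsDeriv2 ε (u x) * u' x * v x)
            = smoothAbsDeriv2 ε (u x) * (b x * u x * u' x - u' x ^ 2) := by
              rw [hflux x (Icc_subset_uIcc hx)]; ring
          _ ≤ ε * b x ^ 2 / 4 := smoothAbsDeriv2_mul_le hε _ _ _
          _ ≤ ε * K ^ 2 / 4 := by gcongr
    _ = ε * K ^ 2 / 4 * (q - p) := by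
        rw [intervalIntegral.integral_const, smul_eq_mul, mul_comm]

theorem integral_smoothAbsDeriv_mul_le_of_periodic {ε K c : ℝ} (hε : 0 < ε) (hc : 0 ≤ c)
    {u u_t b : ℝ → ℝ} (hu : Differentiable ℝ u) (hu' : Differentiable ℝ (deriv u))
    (hb : Differentiable ℝ b) (hbK : ∀ x, |b x| ≤ K) (hu_t : Continuous u_t)
    (hu_per : Function.Periodic u c) (hb_per : Function.Periodic b c)
    (heq : ∀ x, u_t x - deriv (deriv u) x + deriv (fun y => b y * u y) x = 0) :
    ∫ x in 0..c, smoothAbsDeriv ε (u x) * u_t x ≤ ε * K ^ 2 / 4 * c := by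
  have hflux : ∀ x, HasDerivAt (fun y => deriv u y - b y * u y) (u_t x) x := fun x =>
    ((hu' x).hasDerivAt.sub ((hb x).fun_mul (hu x)).hasDerivAt).congr_deriv (by linarith [heq x])
  have hu_c : u c = u 0 := by simpa using hu_per 0
  have hb_c : b c = b 0 := by simpa using hb_per 0
  have hu'_c : deriv u c = deriv u 0 := by simpa using hu_per.deriv 0
  simpa using integral_smoothAbsDeriv_mul_deriv_flux_le hε hc (fun x _ => (hu x).hasDerivAt)
    hu'.continuous.continuousOn (fun x _ => hflux x) (hu_t.intervalIntegrable 0 c)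
    (fun _ _ => rfl) (fun x _ => hbK x) hu_c (by simp only [hu_c, hb_c, hu'_c])

end IntervalIntegral

theorem periodic_convection_diffusion_L1_contraction_general
    (t₁ : ℝ) (a w : ℝ → ℝ → ℝ)
    (hax : ∀ t ∈ Ici t₁, ∀ x : ℝ, DifferentiableAt ℝ (a t) x)
    (haper : ∀ t x : ℝ, a t (x + 1) = a t x)
    (habd : ∃ K : ℝ, ∀ t ∈ Ici t₁, ∀ x : ℝ, |a t x| ≤ K)
    (hwc : ContinuousOn (Function.uncurry w) (Ici t₁ ×ˢ univ))
    (hwt : ∀ t ∈ Ici t₁, ∀ x : ℝ, DifferentiableAt ℝ (fun s => w s x) t)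
    (hwx : ∀ t ∈ Ici t₁, ∀ x : ℝ, DifferentiableAt ℝ (w t) x)
    (hwxx : ∀ t ∈ Ici t₁, ∀ x : ℝ, DifferentiableAt ℝ (partialX w t) x)
    (hwtc : ContinuousOn (fun p : ℝ × ℝ => partialT w p.1 p.2) (Ici t₁ ×ˢ univ))
    (hwper : ∀ t x : ℝ, w t (x + 1) = w t x)
    (hweq : ∀ t : ℝ, t₁ < t → ∀ x : ℝ,
      partialT w t x - partialXX w t x + deriv (fun y => a t y * w t y) x = 0) :
    AntitoneOn (fun t => ∫ x in (0:ℝ)..1, |w t x|) (Ici t₁) := by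
  obtain ⟨K, hK⟩ := habd
  have hrate : ∀ ε > 0, ∀ t ∈ Ioi t₁,
      ∫ x in (0:ℝ)..1, smoothAbsDeriv ε (w t x) * partialT w t x ≤ ε * K ^ 2 / 4 := by
    intro ε hε t ht
    have ht' : t ∈ Ici t₁ := Ioi_subset_Ici_self ht
    simpa using integral_smoothAbsDeriv_mul_le_of_periodic hε zero_le_one (hwx t ht')
      (hwxx t ht') (hax t ht') (hK t ht')
      (continuousOn_univ.1 (hwtc.uncurry_left (f := partialT w) t ht')) (hwper t) (haper t)
      (hweq t ht)
  intro s hs t ht hst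
  have hgrowth ε (hε : 0 < ε) := integral_smoothAbs_sub_le_of_rate_le hε hwc
    (fun τ hτ => hwt τ (Ioi_subset_Ici_self hτ))
    (hwtc.mono (prod_mono Ioi_subset_Ici_self (subset_univ _))) (hrate ε hε) hs ht hst
  have hw (τ) (hτ : τ ∈ Ici t₁) : Continuous (w τ) :=
    continuousOn_univ.1 (hwc.uncurry_left τ hτ)
  refine le_of_forall_pos_le_add_mul (C := 1 + K ^ 2 / 4 * (t - s)) fun ε hε => ?_
  calc ∫ x in (0:ℝ)..1, |w t x| ≤ ∫ x in (0:ℝ)..1, smoothAbs ε (w t x) :=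
        integral_abs_le_integral_smoothAbs (hw t ht) zero_le_one ε
    _ ≤ (∫ x in (0:ℝ)..1, smoothAbs ε (w s x)) + ε * K ^ 2 / 4 * (t - s) := by
        linarith [hgrowth ε hε]
    _ ≤ (∫ x in (0:ℝ)..1, |w s x|) + ε * (1 + K ^ 2 / 4 * (t - s)) := by
        linarith [integral_smoothAbs_le_integral_abs_add (hw s hs) zero_le_one hε.le]

/-- `L¹` contraction for the conservation-form linear convection–diffusion equation
`∂ₜw − ∂ₓₓw + ∂ₓ(a w) = 0` with periodic boundary conditions: the `L¹` norm over one
period is a non-increasing function of time. -/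
theorem periodic_convection_diffusion_L1_contraction
    (t₁ : ℝ) (a w : ℝ → ℝ → ℝ)
    (hac : ContinuousOn (Function.uncurry a) (Ici t₁ ×ˢ univ))
    (hax : ∀ t ∈ Ici t₁, ∀ x : ℝ, DifferentiableAt ℝ (a t) x)
    (haxc : ContinuousOn (fun p : ℝ × ℝ => partialX a p.1 p.2) (Ici t₁ ×ˢ univ))
    (haper : ∀ t x : ℝ, a t (x + 1) = a t x)
    (habd : ∃ K : ℝ, ∀ t ∈ Ici t₁, ∀ x : ℝ, |a t x| ≤ K)
    (hwc : ContinuousOn (Function.uncurry w) (Ici t₁ ×ˢ univ))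
    (hwt : ∀ t ∈ Ici t₁, ∀ x : ℝ, DifferentiableAt ℝ (fun s => w s x) t)
    (hwx : ∀ t ∈ Ici t₁, ∀ x : ℝ, DifferentiableAt ℝ (w t) x)
    (hwxx : ∀ t ∈ Ici t₁, ∀ x : ℝ, DifferentiableAt ℝ (partialX w t) x)
    (hwtc : ContinuousOn (fun p : ℝ × ℝ => partialT w p.1 p.2) (Ici t₁ ×ˢ univ))
    (hwxc : ContinuousOn (fun p : ℝ × ℝ => partialX w p.1 p.2) (Ici t₁ ×ˢ univ))
    (hwxxc : ContinuousOn (fun p : ℝ × ℝ => partialXX w p.1 p.2) (Ici t₁ ×ˢ univ))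
    (hwper : ∀ t x : ℝ, w t (x + 1) = w t x)
    (hweq : ∀ t : ℝ, t₁ < t → ∀ x : ℝ,
      partialT w t x - partialXX w t x + deriv (fun y => a t y * w t y) x = 0) :
    AntitoneOn (fun t => ∫ x in (0:ℝ)..1, |w t x|) (Ici t₁) :=
  periodic_convection_diffusion_L1_contraction_general t₁ a w hax haper habd hwc hwt hwx hwxx hwtc
    hwper hweq
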